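/- arXiv:2407.20412 — 4 statements merged into one kernel-verified Lean document; each statement's English description precedes it below -/
import Mathlib

section
/- With m(t) = t + μi and q(t) = (1+2i)t − δi as maps ℝ/ℤ → ℂ/ℤ[i], the composition c ∘ (m × q) has image equal to τ applied to the image of the composition c ∘ (m × p), where p(t) = t − δi; more precisely, c(m(s), q(t)) = τ(c(m(s'), p(t'))) for appropriate reparametrization, so that c ∘ (m × q) double covers τ(f₀ × g₀). -/
open Complex

/-- The Gaussian integer lattice `ℤ[i]` as an additive subgroup of ℂ. -/
noncomputable def gaussianLattice : AddSubgroup ℂ := AddSubgroup.closure {1, Complex.I}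

/-- The torus `ℂ/ℤ[i]`. -/
abbrev GTorus := ℂ ⧸ gaussianLattice

/-- The quotient projection `ℂ → ℂ/ℤ[i]`. -/
noncomputable def pr : ℂ → GTorus := QuotientAddGroup.mk

/-- `τ(a,b) = (a + i(b−a), b + i(b−a))` at the level of ℂ². -/
noncomputable def tau (z : ℂ × ℂ) : ℂ × ℂ :=
  (z.1 + I * (z.2 - z.1), z.2 + I * (z.2 - z.1))

/-- `c(x,y) = (x + ȳ, x̄ − y)` at the level of ℂ². -/
noncomputable def cMap (z : ℂ × ℂ) : ℂ × ℂ :=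
  (z.1 + (starRingEnd ℂ) z.2, (starRingEnd ℂ) z.1 - z.2)


lemma I_mem_gauss : Complex.I ∈ gaussianLattice :=
  AddSubgroup.subset_closure (by simp)

lemma intI_mem_gauss (k : ℤ) : (k : ℂ) * Complex.I ∈ gaussianLattice := by
  have := AddSubgroup.zsmul_mem _ I_mem_gauss k
  simpa [zsmul_eq_mul] using this

lemma pr_eq_of {a b : ℂ} (h : a - b ∈ gaussianLattice) : pr a = pr b :=
  (QuotientAddGroup.eq_iff_sub_mem).2 h

/-- with `2μ = α − β` in ℝ/ℤ, `δ = α − μ`, `m(t) = t + μi`,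
`p(t) = t − δi`, `q(t) = (1+2i)t − δi`, `f₀(t) = t + αi`, `g₀(t) = t + βi`:
each point `c(m(s), q(t))` agrees mod `ℤ[i]` with `τ(c(m(s'), p(t')))` for suitable
`s', t'`, and the image of `c ∘ (m × q)` in `(ℂ/ℤ[i])²` equals the image of
`τ ∘ (f₀ × g₀)`; i.e. `c ∘ (m × q)` double covers `τ(f₀ × g₀)`. -/
theorem c_m_q_covers_tau_f0_g0 (α β μ δ : ℝ)
    (hμ : ∃ k : ℤ, 2 * μ = α - β + k) (hδ : δ = α - μ) :
    (∀ s t : ℝ, ∃ s' t' : ℝ,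
      (cMap (s + μ * I, (1 + 2 * I) * t - δ * I)).1 -
          (tau (cMap (s' + μ * I, t' - δ * I))).1 ∈ gaussianLattice ∧
      (cMap (s + μ * I, (1 + 2 * I) * t - δ * I)).2 -
          (tau (cMap (s' + μ * I, t' - δ * I))).2 ∈ gaussianLattice) ∧
    Set.range (fun st : ℝ × ℝ =>
        (pr (cMap (st.1 + μ * I, (1 + 2 * I) * st.2 - δ * I)).1,
         pr (cMap (st.1 + μ * I, (1 + 2 * I) * st.2 - δ * I)).2)) =
      Set.range (fun ab : ℝ × ℝ =>
        (pr (tau (ab.1 + α * I, ab.2 + β * I)).1,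
         pr (tau (ab.1 + α * I, ab.2 + β * I)).2)) := by
  obtain ⟨k, hk⟩ := hμ
  subst hδ
  constructor
  · intro s t
    refine ⟨s - 2 * μ, t, ?_, ?_⟩
    · convert zero_mem gaussianLattice using 1
      apply Complex.ext <;> simp [cMap, tau, map_ofNat] <;> ring
    · convert zero_mem gaussianLattice using 1
      apply Complex.ext <;> simp [cMap, tau, map_ofNat] <;> ring
  · ext p
    simp only [Set.mem_range]
    constructor
    · rintro ⟨⟨s, t⟩, rfl⟩
      refine ⟨(s + t - (α - β), s - t - (α - β)), ?_⟩
      refine Prod.ext ?_ ?_ <;> dsimp only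
      · apply pr_eq_of
        convert zero_mem gaussianLattice using 1
        apply Complex.ext <;> simp [cMap, tau, map_ofNat] <;> ring
      · apply pr_eq_of
        have h : (tau (((s + t - (α - β) : ℝ) : ℂ) + α * I, ((s - t - (α - β) : ℝ) : ℂ) + β * I)).2 -
            (cMap ((s : ℂ) + μ * I, (1 + 2 * I) * t - ((α - μ : ℝ) : ℂ) * I)).2 = (k : ℂ) * I := by
          apply Complex.ext <;> simp [cMap, tau, map_ofNat] <;> linarith [hk]
        rw [h]
        exact intI_mem_gauss k
    · rintro ⟨⟨a, b⟩, rfl⟩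
      refine ⟨(a + (α - β) - (a - b) / 2, (a - b) / 2), ?_⟩
      refine Prod.ext ?_ ?_ <;> dsimp only
      · apply pr_eq_of
        convert zero_mem gaussianLattice using 1
        apply Complex.ext <;> simp [cMap, tau, map_ofNat] <;> ring
      · apply pr_eq_of
        have h : (cMap (((a + (α - β) - (a - b) / 2 : ℝ) : ℂ) + μ * I,
              (1 + 2 * I) * (((a - b) / 2 : ℝ) : ℂ) - ((α - μ : ℝ) : ℂ) * I)).2 -
            (tau ((a : ℂ) + α * I, (b : ℂ) + β * I)).2 = ((-k : ℤ) : ℂ) * I := by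
          apply Complex.ext <;> simp [cMap, tau, map_ofNat] <;> linarith [hk]
        rw [h]
        exact intI_mem_gauss (-k)
end

section
/- Let f, g: ℝ → ℝ² be injective continuous maps with disjoint images satisfying f(x+1) = f(x) + (0,1) and g(x+1) = g(x) + (0,1) for all x. Then inf{d(f(x), g(y)) : x, y ∈ ℝ} > 0, i.e., the images of f and g are at positive distance from each other. -/
open Complex Function Set

/-!
Since both curves advance by the same vector `v ≠ 0` per unit of time, `dist (f x) (g y)` is
invariant under the diagonal shift `(x, y) ↦ (x + 1, y + 1)`, and `f x - x • v`, `g y - y • v`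
are periodic, hence bounded. So the distance grows like `|x - y| ‖v‖` away from the diagonal,
and near the diagonal a shift brings `(x, y)` into a compact box, on which the positive
continuous distance has a positive minimum.
-/

theorem exists_pos_le_of_diagonal_periodic {φ : ℝ → ℝ → ℝ} (hφ : Continuous (uncurry φ))
    (hpos : ∀ x y, 0 < φ x y) (hper : ∀ x y, φ (x + 1) (y + 1) = φ x y)
    {R : ℝ} (hfar : ∀ x y, R ≤ |x - y| → 1 ≤ φ x y) :
    ∃ ε > 0, ∀ x y, ε ≤ φ x y := by
  have hshift (n : ℤ) (x y : ℝ) : φ (x + n) (y + n) = φ x y := by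
    have hdiag : Periodic (fun t => φ (x + t) (y + t)) 1 := fun t => by
      simpa only [add_assoc] using hper (x + t) (y + t)
    simpa using hdiag.int_mul_eq n
  have hK : IsCompact (Icc (0 : ℝ) 1 ×ˢ Icc (-|R|) (|R| + 1)) := isCompact_Icc.prod isCompact_Icc
  obtain ⟨p, -, hpmin⟩ := hK.exists_isMinOn
    ⟨(0, 0), ⟨le_rfl, zero_le_one⟩, by simp, by positivity⟩ hφ.continuousOn
  refine ⟨min (φ p.1 p.2) 1, lt_min (hpos _ _) one_pos, fun x y => ?_⟩
  have hreduce := hshift ⌊x⌋ (Int.fract x) (y - ⌊x⌋)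
  rw [Int.fract_add_floor, sub_add_cancel] at hreduce
  rw [hreduce]
  by_cases hxy : R ≤ |Int.fract x - (y - ⌊x⌋)|
  · exact (min_le_right _ _).trans (hfar _ _ hxy)
  · have hy := abs_lt.mp ((not_le.mp hxy).trans_le (le_abs_self R))
    have hx₀ := Int.fract_nonneg x
    have hx₁ := Int.fract_lt_one x
    refine (min_le_left _ _).trans (isMinOn_iff.mp hpmin (Int.fract x, y - ⌊x⌋) ?_)
    exact ⟨⟨hx₀, hx₁.le⟩, by constructor <;> linarith [hy.1, hy.2]⟩

section DriftingCurves

variable {E : Type*} [NormedAddCommGroup E] [NormedSpace ℝ E] {f g : ℝ → E} {v : E}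

theorem periodic_sub_smul_of_add_one (hper : ∀ x, f (x + 1) = f x + v) :
    Periodic (fun x => f x - x • v) 1 := fun x => by
  simp only [hper, add_smul, one_smul]
  abel

theorem exists_norm_sub_smul_le_of_add_one (hf : Continuous f)
    (hper : ∀ x, f (x + 1) = f x + v) : ∃ M, ∀ x, ‖f x - x • v‖ ≤ M := by
  obtain ⟨M, hM⟩ := isBounded_iff_forall_norm_le.mp
    ((periodic_sub_smul_of_add_one hper).isBounded_of_continuous one_ne_zero
      (hf.sub (continuous_id.smul continuous_const)))
  exact ⟨M, fun x => hM _ (mem_range_self x)⟩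

theorem abs_sub_mul_norm_sub_le_dist {Mf Mg : ℝ} (hMf : ∀ x, ‖f x - x • v‖ ≤ Mf)
    (hMg : ∀ y, ‖g y - y • v‖ ≤ Mg) (x y : ℝ) :
    |x - y| * ‖v‖ - (Mf + Mg) ≤ dist (f x) (g y) := by
  have hsplit : (x - y) • v = (f x - g y) - ((f x - x • v) - (g y - y • v)) := by
    rw [sub_smul]
    abel
  calc |x - y| * ‖v‖ - (Mf + Mg)
      ≤ ‖(x - y) • v‖ - ‖(f x - x • v) - (g y - y • v)‖ := by
        rw [norm_smul, Real.norm_eq_abs]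
        linarith [norm_sub_le (f x - x • v) (g y - y • v), hMf x, hMg y]
    _ ≤ ‖f x - g y‖ := by
        rw [hsplit]
        linarith [norm_sub_le (f x - g y) ((f x - x • v) - (g y - y • v))]
    _ = dist (f x) (g y) := (dist_eq_norm _ _).symm

theorem exists_pos_le_dist_of_add_one (hf : Continuous f) (hg : Continuous g)
    (hdisj : Disjoint (range f) (range g)) (hv : v ≠ 0)
    (hfper : ∀ x, f (x + 1) = f x + v) (hgper : ∀ x, g (x + 1) = g x + v) :
    ∃ ε > 0, ∀ x y, ε ≤ dist (f x) (g y) := by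
  obtain ⟨Mf, hMf⟩ := exists_norm_sub_smul_le_of_add_one hf hfper
  obtain ⟨Mg, hMg⟩ := exists_norm_sub_smul_le_of_add_one hg hgper
  have hv' : 0 < ‖v‖ := norm_pos_iff.mpr hv
  refine exists_pos_le_of_diagonal_periodic (φ := fun x y => dist (f x) (g y))
    ((hf.comp continuous_fst).dist (hg.comp continuous_snd))
    (fun x y => dist_pos.mpr (hdisj.ne_of_mem (mem_range_self x) (mem_range_self y)))
    (fun x y => by simp only [hfper, hgper, dist_add_right]) (R := (Mf + Mg + 1) / ‖v‖)
    fun x y hxy => ?_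
  have hfar := abs_sub_mul_norm_sub_le_dist hMf hMg x y
  rw [div_le_iff₀ hv'] at hxy
  linarith

end DriftingCurves

theorem periodic_disjoint_curves_positive_distance_general (f g : ℝ → ℂ)
    (hf : Continuous f) (hg : Continuous g)
    (hdisj : Disjoint (Set.range f) (Set.range g))
    (hfper : ∀ x, f (x + 1) = f x + I) (hgper : ∀ x, g (x + 1) = g x + I) :
    ∃ ε > 0, ∀ x y : ℝ, ε ≤ dist (f x) (g y) :=
  exists_pos_le_dist_of_add_one hf hg hdisj I_ne_zero hfper hgper

/-- if `f, g : ℝ → ℝ² ≅ ℂ` are injective continuous maps with disjoint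
images, satisfying `f(x+1) = f(x) + (0,1)` and `g(x+1) = g(x) + (0,1)` (i.e. `+ i`
under ℝ² ≅ ℂ), then the images of `f` and `g` are at positive distance:
`inf { d(f x, g y) } > 0`. -/
theorem periodic_disjoint_curves_positive_distance (f g : ℝ → ℂ)
    (hf : Continuous f) (hg : Continuous g)
    (hfinj : Function.Injective f) (hginj : Function.Injective g)
    (hdisj : Disjoint (Set.range f) (Set.range g))
    (hfper : ∀ x, f (x + 1) = f x + I) (hgper : ∀ x, g (x + 1) = g x + I) :
    ∃ ε > 0, ∀ x y : ℝ, ε ≤ dist (f x) (g y) :=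
  periodic_disjoint_curves_positive_distance_general f g hf hg hdisj hfper hgper
end

section
/- Suppose for each n there is a square with vertices p₁ⁿ, p₂ⁿ, p₃ⁿ, p₄ⁿ ∈ ℝ², all contained in a fixed compact set K, with side length bounded below by a fixed ε > 0, such that pⱼⁿ ∈ im(fₙ) ∪ im(gₙ) for continuous maps fₙ, gₙ converging uniformly on compact sets to continuous maps f, g. Then there is a nondegenerate square with all four vertices in im(f) ∪ im(g). -/
open Complex Filter
open Topology Function Uniformity

/-! Along a subsequence the four vertices converge, since `K⁴` is compact; the square relations
and the bound `ε` on the side are closed conditions, so the limit is a nondegenerate square.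
Because `Fₙ - f` is `1`-periodic, locally uniform convergence is uniform on all of `ℝ`, so each
limit vertex lies in the closure of `im f ∪ im g`. That set is closed: `f x - x • i` is periodic,
hence bounded, so `‖f x‖ → ∞` as `|x| → ∞` and `f` is a proper map. -/

theorem periodic_sub_of_add_one {E : Type*} [AddCommGroup E] {f g : ℝ → E} {v : E}
    (hf : ∀ x, f (x + 1) = f x + v) (hg : ∀ x, g (x + 1) = g x + v) :
    Periodic (fun x => f x - g x) 1 := fun x => by
  simp only [hf, hg]
  abel

section TranslationPeriodic

variable {E : Type*} [NormedAddCommGroup E] [NormedSpace ℝ E] {f : ℝ → E} {v : E}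

theorem tendsto_cocompact_of_add_one (hfc : Continuous f) (hf : ∀ x, f (x + 1) = f x + v)
    (hv : v ≠ 0) [ProperSpace E] : Tendsto f (cocompact ℝ) (cocompact E) := by
  have hsmul (x : ℝ) : (x + 1) • v = x • v + v := by rw [add_smul, one_smul]
  obtain ⟨M, hM⟩ := ((periodic_sub_of_add_one (g := (· • v)) hf hsmul).isBounded_of_continuous
    one_ne_zero (by fun_prop)).exists_norm_le
  have hlower : ∀ x, ‖x‖ * ‖v‖ - M ≤ ‖f x‖ := fun x => by
    have := norm_sub_norm_le (x • v) (f x)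
    rw [norm_smul, norm_sub_rev] at this
    linarith [hM _ ⟨x, rfl⟩]
  rw [← Metric.cobounded_eq_cocompact (α := E), ← tendsto_norm_atTop_iff_cobounded]
  refine tendsto_atTop_mono hlower (tendsto_atTop_add_const_right _ _ ?_)
  exact tendsto_norm_cocompact_atTop.atTop_mul_const (norm_pos_iff.2 hv)

theorem isClosed_range_of_add_one (hfc : Continuous f) (hf : ∀ x, f (x + 1) = f x + v)
    (hv : v ≠ 0) [ProperSpace E] : IsClosed (Set.range f) :=
  (isProperMap_iff_tendsto_cocompact.2 ⟨hfc, tendsto_cocompact_of_add_one hfc hf hv⟩).isClosed_range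

end TranslationPeriodic

theorem tendstoUniformly_of_periodic_sub {ι E : Type*} [NormedAddCommGroup E]
    {F : ι → ℝ → E} {f : ℝ → E} {l : Filter ι} {c : ℝ} (hc : 0 < c)
    (hper : ∀ n, Periodic (fun x => F n x - f x) c) (h : TendstoLocallyUniformly F f l) :
    TendstoUniformly F f l := by
  have hIcc : TendstoUniformlyOn F f l (Set.Icc 0 c) :=
    (tendstoLocallyUniformlyOn_iff_tendstoUniformlyOn_of_compact isCompact_Icc).1
      h.tendstoLocallyUniformlyOn
  rw [Metric.tendstoUniformly_iff]
  intro δ hδ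
  filter_upwards [Metric.tendstoUniformlyOn_iff.1 hIcc δ hδ] with n hn x
  obtain ⟨y, hy, hxy⟩ := (hper n).exists_mem_Ico₀ hc x
  have := hn y (Set.Ico_subset_Icc_self hy)
  rwa [dist_comm, dist_eq_norm, ← hxy, ← dist_eq_norm, dist_comm] at this

theorem TendstoUniformly.sumElim {ι α α' β : Type*} [UniformSpace β] {l : Filter ι}
    {F : ι → α → β} {f : α → β} {G : ι → α' → β} {g : α' → β}
    (hF : TendstoUniformly F f l) (hG : TendstoUniformly G g l) :
    TendstoUniformly (fun n => Sum.elim (F n) (G n)) (Sum.elim f g) l := by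
  intro u hu
  filter_upwards [hF u hu, hG u hu] with n hFn hGn
  rintro (x | x)
  exacts [hFn x, hGn x]

theorem TendstoUniformly.mem_closure_range {ι α β γ : Type*} [UniformSpace β]
    {F : ι → α → β} {f : α → β} {l : Filter ι} (h : TendstoUniformly F f l)
    {l' : Filter γ} [l'.NeBot] {u : γ → ι} (hu : Tendsto u l' l) {q : γ → β} {Q : β}
    (hq : Tendsto q l' (𝓝 Q)) (hmem : ∀ n, q n ∈ Set.range (F (u n))) :
    Q ∈ closure (Set.range f) := by
  choose x hx using hmem
  have hclose : Tendsto (fun n => (q n, f (x n))) l' (𝓤 β) := by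
    simp only [← hx]
    exact ((tendstoUniformly_iff_tendsto.1 h).comp (hu.prodMk tendsto_top)).uniformity_symm
  exact mem_closure_of_tendsto (hq.congr_uniformity hclose)
    (Eventually.of_forall fun n => Set.mem_range_self _)

def squaresWithSide (ε : ℝ) : Set (Fin 4 → ℂ) :=
  {q | q 1 = q 0 + I * (q 2 - q 0) ∧ q 3 = q 2 + I * (q 2 - q 0) ∧ ε ≤ dist (q 1) (q 0)}

theorem isClosed_squaresWithSide (ε : ℝ) : IsClosed (squaresWithSide ε) := by
  simp only [squaresWithSide, Set.ofPred_and]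
  exact (isClosed_eq (by fun_prop) (by fun_prop)).inter
    ((isClosed_eq (by fun_prop) (by fun_prop)).inter (isClosed_le continuous_const (by fun_prop)))

theorem ne_of_mem_squaresWithSide {ε : ℝ} (hε : 0 < ε) {q : Fin 4 → ℂ}
    (hq : q ∈ squaresWithSide ε) : q 0 ≠ q 2 := by
  intro h
  have := hq.2.2
  rw [hq.1, h, sub_self, mul_zero, add_zero, dist_self] at this
  linarith

theorem limit_of_inscribed_squares_general
    (K : Set ℂ) (hK : IsCompact K) (ε : ℝ) (hε : 0 < ε)
    (F G : ℕ → ℝ → ℂ) (f g : ℝ → ℂ)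
    (hfc : Continuous f) (hgc : Continuous g)
    (hFper : ∀ n x, F n (x + 1) = F n x + I) (hGper : ∀ n x, G n (x + 1) = G n x + I)
    (hfper : ∀ x, f (x + 1) = f x + I) (hgper : ∀ x, g (x + 1) = g x + I)
    (hFlim : TendstoLocallyUniformly F f atTop)
    (hGlim : TendstoLocallyUniformly G g atTop)
    (p₁ p₂ p₃ p₄ : ℕ → ℂ)
    (hsq : ∀ n, p₂ n = p₁ n + I * (p₃ n - p₁ n) ∧ p₄ n = p₃ n + I * (p₃ n - p₁ n))
    (hKmem : ∀ n, p₁ n ∈ K ∧ p₂ n ∈ K ∧ p₃ n ∈ K ∧ p₄ n ∈ K)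
    (hside : ∀ n, ε ≤ dist (p₂ n) (p₁ n))
    (hmem : ∀ n, p₁ n ∈ Set.range (F n) ∪ Set.range (G n) ∧
                 p₂ n ∈ Set.range (F n) ∪ Set.range (G n) ∧
                 p₃ n ∈ Set.range (F n) ∪ Set.range (G n) ∧
                 p₄ n ∈ Set.range (F n) ∪ Set.range (G n)) :
    ∃ q₁ q₂ q₃ q₄ : ℂ,
      q₂ = q₁ + I * (q₃ - q₁) ∧ q₄ = q₃ + I * (q₃ - q₁) ∧ q₁ ≠ q₃ ∧
      q₁ ∈ Set.range f ∪ Set.range g ∧ q₂ ∈ Set.range f ∪ Set.range g ∧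
      q₃ ∈ Set.range f ∪ Set.range g ∧ q₄ ∈ Set.range f ∪ Set.range g := by
  -- On `ℝ ⊕ ℝ`, `im Fₙ ∪ im Gₙ` becomes the image of the single map `Sum.elim Fₙ Gₙ`.
  have hlim : TendstoUniformly (fun n => Sum.elim (F n) (G n)) (Sum.elim f g) atTop :=
    (tendstoUniformly_of_periodic_sub one_pos (fun n => periodic_sub_of_add_one (hFper n) hfper)
      hFlim).sumElim
    (tendstoUniformly_of_periodic_sub one_pos (fun n => periodic_sub_of_add_one (hGper n) hgper)
      hGlim)
  have hclosed : IsClosed (Set.range (Sum.elim f g)) := by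
    rw [Set.Sum.elim_range]
    exact (isClosed_range_of_add_one hfc hfper I_ne_zero).union
      (isClosed_range_of_add_one hgc hgper I_ne_zero)
  let p : ℕ → Fin 4 → ℂ := fun n => ![p₁ n, p₂ n, p₃ n, p₄ n]
  have hp : ∀ n, p n ∈ Set.univ.pi (fun _ => K) ∩ squaresWithSide ε := fun n =>
    ⟨by simp [p, Fin.forall_fin_succ, hKmem n], (hsq n).1, (hsq n).2, hside n⟩
  obtain ⟨q, ⟨-, hq⟩, φ, hφ, hpq⟩ :=
    ((isCompact_univ_pi fun _ => hK).inter_right (isClosed_squaresWithSide ε)).tendsto_subseq hp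
  have hvert : ∀ i, q i ∈ Set.range f ∪ Set.range g := fun i => by
    rw [← Set.Sum.elim_range, ← hclosed.closure_eq]
    refine hlim.mem_closure_range hφ.tendsto_atTop (tendsto_pi_nhds.1 hpq i) fun n => ?_
    rw [Set.Sum.elim_range]
    fin_cases i <;> simp [p, hmem (φ n)]
  exact ⟨q 0, q 1, q 2, q 3, hq.1, hq.2.1, ne_of_mem_squaresWithSide hε hq,
    hvert 0, hvert 1, hvert 2, hvert 3⟩

/-- suppose `fₙ, gₙ : ℝ → ℝ² ≅ ℂ` are continuous periodic curves
(`f(x+1) = f(x) + i`) converging uniformly on compact sets to continuous (periodic)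
`f, g`, and for each `n` there is a square `(p₁ⁿ, p₂ⁿ, p₄ⁿ, p₃ⁿ)` (i.e.
`p₂ⁿ = p₁ⁿ + i(p₃ⁿ − p₁ⁿ)`, `p₄ⁿ = p₃ⁿ + i(p₃ⁿ − p₁ⁿ)`) with all vertices in a fixed
compact set `K`, side length at least a fixed `ε > 0`, and all vertices on
`im(fₙ) ∪ im(gₙ)`. Then there is a nondegenerate square with all four vertices in
`im(f) ∪ im(g)`. -/
theorem limit_of_inscribed_squares
    (K : Set ℂ) (hK : IsCompact K) (ε : ℝ) (hε : 0 < ε)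
    (F G : ℕ → ℝ → ℂ) (f g : ℝ → ℂ)
    (hFc : ∀ n, Continuous (F n)) (hGc : ∀ n, Continuous (G n))
    (hfc : Continuous f) (hgc : Continuous g)
    (hFper : ∀ n x, F n (x + 1) = F n x + I) (hGper : ∀ n x, G n (x + 1) = G n x + I)
    (hfper : ∀ x, f (x + 1) = f x + I) (hgper : ∀ x, g (x + 1) = g x + I)
    (hFlim : TendstoLocallyUniformly F f atTop)
    (hGlim : TendstoLocallyUniformly G g atTop)
    (p₁ p₂ p₃ p₄ : ℕ → ℂ)
    (hsq : ∀ n, p₂ n = p₁ n + I * (p₃ n - p₁ n) ∧ p₄ n = p₃ n + I * (p₃ n - p₁ n))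
    (hKmem : ∀ n, p₁ n ∈ K ∧ p₂ n ∈ K ∧ p₃ n ∈ K ∧ p₄ n ∈ K)
    (hside : ∀ n, ε ≤ dist (p₂ n) (p₁ n))
    (hmem : ∀ n, p₁ n ∈ Set.range (F n) ∪ Set.range (G n) ∧
                 p₂ n ∈ Set.range (F n) ∪ Set.range (G n) ∧
                 p₃ n ∈ Set.range (F n) ∪ Set.range (G n) ∧
                 p₄ n ∈ Set.range (F n) ∪ Set.range (G n)) :
    ∃ q₁ q₂ q₃ q₄ : ℂ,
      q₂ = q₁ + I * (q₃ - q₁) ∧ q₄ = q₃ + I * (q₃ - q₁) ∧ q₁ ≠ q₃ ∧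
      q₁ ∈ Set.range f ∪ Set.range g ∧ q₂ ∈ Set.range f ∪ Set.range g ∧
      q₃ ∈ Set.range f ∪ Set.range g ∧ q₄ ∈ Set.range f ∪ Set.range g :=
  limit_of_inscribed_squares_general K hK ε hε F G f g hfc hgc hFper hGper hfper hgper hFlim hGlim
    p₁ p₂ p₃ p₄ hsq hKmem hside hmem
end

section
/- Let N be a positive integer and f: ℝ → ℝ² continuous with f(x+1) = f(x) + (0,1). Define f̃: ℝ/ℤ → ℝ²/ℤ² by f̃(t) = (1/N) f(Nt) mod ℤ². Then f̃ is well-defined and continuous, and if f is injective and N > 2λ where im(f) ⊂ [−λ,λ] × ℝ, then f̃ is injective. -/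
open Complex

lemma mem_gaussianLattice {z : ℂ} :
    z ∈ gaussianLattice ↔ ∃ m n : ℤ, z = (m : ℂ) + (n : ℂ) * I := by
  constructor
  · intro hz
    refine AddSubgroup.closure_induction ?_ ⟨0, 0, by simp⟩ ?_ ?_ hz
    · rintro x (rfl | rfl)
      · exact ⟨1, 0, by simp⟩
      · exact ⟨0, 1, by simp⟩
    · rintro x y hx hy ⟨m, n, rfl⟩ ⟨m', n', rfl⟩
      exact ⟨m + m', n + n', by push_cast; ring⟩
    · rintro x hx ⟨m, n, rfl⟩
      exact ⟨-m, -n, by push_cast; ring⟩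
  · rintro ⟨m, n, rfl⟩
    have h1 : (1 : ℂ) ∈ gaussianLattice := AddSubgroup.subset_closure (by simp)
    have hI : (I : ℂ) ∈ gaussianLattice := AddSubgroup.subset_closure (by simp)
    have := AddSubgroup.add_mem _ (AddSubgroup.zsmul_mem _ h1 m)
      (AddSubgroup.zsmul_mem _ hI n)
    simpa [zsmul_eq_mul, mul_comm] using this

/-- for `N` a positive integer and `f : ℝ → ℝ² ≅ ℂ` continuous with
`f(x+1) = f(x) + i`, the map `f̃ : ℝ/ℤ → ℝ²/ℤ²`, `f̃(t) = (1/N)·f(Nt) mod ℤ²`, is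
well-defined and continuous; and if `f` is injective and `im(f) ⊆ [−λ,λ] × ℝ` with
`N > 2λ`, then `f̃` is injective. -/
theorem rescaled_curve_on_torus (N : ℕ) (hN : 0 < N) (f : ℝ → ℂ)
    (hf : Continuous f) (hper : ∀ x, f (x + 1) = f x + I) :
    ∃ ftilde : AddCircle (1 : ℝ) → GTorus,
      (∀ t : ℝ, ftilde (t : AddCircle (1 : ℝ)) = pr ((N : ℂ)⁻¹ * f ((N : ℝ) * t))) ∧
      Continuous ftilde ∧
      (Function.Injective f →
        ∀ lam : ℝ, (∀ x : ℝ, |(f x).re| ≤ lam) → 2 * lam < (N : ℝ) →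
          Function.Injective ftilde) := by
  have hNR : (N : ℝ) ≠ 0 := Nat.cast_ne_zero.mpr hN.ne'
  have hNC : (N : ℂ) ≠ 0 := Nat.cast_ne_zero.mpr hN.ne'
  -- integer periodicity: f (x + k) = f x + k I
  have hint : ∀ (k : ℤ) (x : ℝ), f (x + (k : ℝ)) = f x + (k : ℂ) * I := by
    set F : ℝ → ℂ := fun x => f x - (x : ℂ) * I with hF
    have hFper : Function.Periodic F 1 := by
      intro x
      simp only [hF]
      rw [hper]
      push_cast
      ring
    intro k x
    have h := (hFper.int_mul k) x
    simp only [hF, mul_one] at h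
    push_cast at h
    linear_combination h
  set g : ℝ → GTorus := fun t => pr ((N : ℂ)⁻¹ * f ((N : ℝ) * t)) with hg
  have hwd : ∀ a b : ℝ,
      (QuotientAddGroup.leftRel (AddSubgroup.zmultiples (1 : ℝ))) a b → g a = g b := by
    intro a b hab
    rw [QuotientAddGroup.leftRel_apply] at hab
    obtain ⟨k, hk⟩ := hab
    simp only [zsmul_eq_mul, mul_one] at hk
    have hb : b = a + (k : ℝ) := by linarith
    subst hb
    have harg : (N : ℝ) * (a + (k : ℝ)) = (N : ℝ) * a + (((N : ℤ) * k : ℤ) : ℝ) := by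
      push_cast; ring
    simp only [hg]
    rw [harg, hint]
    have key : (N : ℂ)⁻¹ * (f ((N : ℝ) * a) + (((N : ℤ) * k : ℤ) : ℂ) * I)
        = (N : ℂ)⁻¹ * f ((N : ℝ) * a) + (k : ℂ) * I := by
      push_cast
      rw [mul_add]
      congr 1
      rw [show (N : ℂ) * (k : ℂ) * I = (N : ℂ) * ((k : ℂ) * I) by ring,
        inv_mul_cancel_left₀ hNC]
    rw [key]
    unfold pr
    symm
    rw [QuotientAddGroup.eq]
    exact mem_gaussianLattice.mpr ⟨0, -k, by push_cast; ring⟩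
  refine ⟨fun q => Quotient.liftOn' q g hwd, fun t => rfl, ?_, ?_⟩
  · refine Continuous.quotient_liftOn' ?_ _
    exact Continuous.comp continuous_quotient_mk'
      (continuous_const.mul (hf.comp (continuous_const.mul continuous_id)))
  · intro hinj lam hlam hNlam a b
    induction a using QuotientAddGroup.induction_on with | H s => ?_
    induction b using QuotientAddGroup.induction_on with | H t => ?_
    intro hst
    simp only [Quotient.liftOn'_mk'', hg, pr] at hst
    rw [QuotientAddGroup.eq] at hst
    obtain ⟨m, n, hmn⟩ := mem_gaussianLattice.mp hst
    have hdiff : f ((N : ℝ) * t) - f ((N : ℝ) * s)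
        = (N : ℂ) * (m : ℂ) + (N : ℂ) * ((n : ℂ) * I) := by
      have h := congrArg (fun z => (N : ℂ) * z) hmn
      simp only [mul_add, mul_neg, mul_inv_cancel_left₀ hNC] at h
      linear_combination h
    have hre : (f ((N : ℝ) * t)).re - (f ((N : ℝ) * s)).re = (N : ℝ) * (m : ℝ) := by
      have h := congrArg Complex.re hdiff
      simpa using h
    have hm0 : m = 0 := by
      have h1 := hlam ((N : ℝ) * t)
      have h2 := hlam ((N : ℝ) * s)
      have hb : |(N : ℝ) * (m : ℝ)| ≤ 2 * lam := by
        rw [← hre]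
        calc |(f ((N : ℝ) * t)).re - (f ((N : ℝ) * s)).re|
            ≤ |(f ((N : ℝ) * t)).re| + |(f ((N : ℝ) * s)).re| := abs_sub _ _
          _ ≤ 2 * lam := by linarith
      by_contra hm
      have h3 : (1 : ℝ) ≤ |(m : ℝ)| := by
        have h4 : (1 : ℤ) ≤ |m| := Int.one_le_abs hm
        calc (1 : ℝ) ≤ ((|m| : ℤ) : ℝ) := by exact_mod_cast h4
          _ = |(m : ℝ)| := by push_cast; rfl
      have hNpos : (0 : ℝ) < N := by positivity
      have h5 : (N : ℝ) ≤ |(N : ℝ) * (m : ℝ)| := by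
        rw [abs_mul, abs_of_pos hNpos]
        nlinarith
      linarith
    subst hm0
    have hfeq : f ((N : ℝ) * t) = f ((N : ℝ) * s + (((N : ℤ) * n : ℤ) : ℝ)) := by
      rw [hint]
      push_cast at hdiff ⊢
      linear_combination hdiff
    have ht := hinj hfeq
    have hts : t = s + (n : ℝ) := by
      have h6 : (N : ℝ) * t = (N : ℝ) * (s + (n : ℝ)) := by
        rw [ht]; push_cast; ring
      exact mul_left_cancel₀ hNR h6
    rw [QuotientAddGroup.eq]
    refine ⟨n, ?_⟩
    simp only [zsmul_eq_mul, mul_one, hts]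
    ring
end
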